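/- Let G be a countable discrete amenable group with right Følner sequence (F_k), acting by *-automorphisms Θ on a unital C*-algebra A such that there exists at least one Θ-invariant state. Let a ∈ A be positive. Then the sequence k ↦ ‖(1/|F_k|) ∑_{g∈F_k} Θ_g a‖ converges, and its limit equals m(a) := sup { ψ(a) : ψ a Θ-invariant state on A }. -/

import Mathlib

/-!
Write `Aₖ x = |Fₖ|⁻¹ ∑_{g ∈ Fₖ} Θ_g x` for the Følner averages. An invariant state `ψ` satisfies
`ψ a = ψ (Aₖ a) ≤ ‖Aₖ a‖`, so `m(a) ≤ ‖Aₖ a‖` for every `k`. Conversely, Hahn–Banach gives states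
`φₖ` with `φₖ (Aₖ a) = ‖Aₖ a‖`; the averaged states `x ↦ |Fₖ|⁻¹ ∑_{g ∈ Fₖ} φₖ (Θ_g x)` still take
the value `‖Aₖ a‖` at `a`, and the Følner condition makes each of their pointwise cluster points
(which exist by Tychonoff) an invariant state `ψ`. Hence every cluster value of `‖Aₖ a‖` is some
`ψ a ≤ m(a)`.
-/

open Filter

/-- A state on a unital C*-algebra: a linear, unital, positive functional. -/
def IsState {A : Type*} [NormedRing A] [StarRing A] [NormedAlgebra ℂ A]
    (φ : A → ℂ) : Prop :=
  (∀ x y : A, φ (x + y) = φ x + φ y) ∧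
  (∀ (c : ℂ) (x : A), φ (c • x) = c * φ x) ∧
  φ 1 = 1 ∧
  ∀ a : A, 0 ≤ (φ (star a * a)).re ∧ (φ (star a * a)).im = 0

open Topology Finset
open scoped ComplexOrder

lemma Complex.eq_of_norm_le_of_add_eq {z w : ℂ} {p q : ℝ} (hz : ‖z‖ ≤ p) (hw : ‖w‖ ≤ q)
    (h : z + w = p + q) : z = p := by
  have hre : z.re + w.re = p + q := by simpa using congrArg Complex.re h
  have hzp : ‖z‖ = p := by
    linarith [Complex.re_le_norm z, Complex.re_le_norm w]
  rw [← hzp]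
  exact RCLike.norm_le_re_iff_eq_norm.1 (show ‖z‖ ≤ z.re by linarith [Complex.re_le_norm w])

lemma algebraMap_real_eq_smul_one {A : Type*} [Ring A] [Algebra ℂ A] (r : ℝ) :
    algebraMap ℝ A r = (r : ℂ) • (1 : A) := by
  rw [Algebra.algebraMap_eq_smul_one, Complex.coe_smul]

lemma Finset.norm_sum_sub_sum_le_card_symmDiff_mul {ι E : Type*} [DecidableEq ι]
    [SeminormedAddCommGroup E] (s t : Finset ι) {u : ι → E} {C : ℝ} (hu : ∀ i, ‖u i‖ ≤ C) :
    ‖∑ i ∈ t, u i - ∑ i ∈ s, u i‖ ≤ #(symmDiff s t) * C := by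
  have hsum : ∀ r : Finset ι, ‖∑ i ∈ r, u i‖ ≤ #r * C := fun r =>
    (norm_sum_le_of_le r fun i _ => hu i).trans_eq (by rw [sum_const, nsmul_eq_mul])
  rw [← sum_sdiff_sub_sum_sdiff, symmDiff_def, sup_eq_union,
    card_union_of_disjoint disjoint_sdiff_sdiff, Nat.cast_add, add_mul, add_comm]
  exact (norm_sub_le _ _).trans (add_le_add (hsum _) (hsum _))

lemma norm_inv_card_mul_sum_le {ι : Type*} {s : Finset ι} (hs : s.Nonempty) {u : ι → ℂ} {C : ℝ}
    (hu : ∀ i ∈ s, ‖u i‖ ≤ C) : ‖(#s : ℂ)⁻¹ * ∑ i ∈ s, u i‖ ≤ C := by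
  rw [norm_mul, norm_inv, Complex.norm_natCast, inv_mul_le_iff₀ (by exact_mod_cast hs.card_pos)]
  exact (norm_sum_le_of_le s hu).trans_eq (by rw [sum_const, nsmul_eq_mul])

lemma norm_inv_card_mul_sum_mul_right_sub_le {G : Type*} [Group G] [DecidableEq G] (s : Finset G)
    {u : G → ℂ} {C : ℝ} (hu : ∀ g, ‖u g‖ ≤ C) (h : G) :
    ‖(#s : ℂ)⁻¹ * ∑ g ∈ s, u (g * h) - (#s : ℂ)⁻¹ * ∑ g ∈ s, u g‖ ≤
      #(symmDiff s (s.image (· * h))) / #s * C := by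
  rw [← mul_sub, norm_mul, norm_inv, Complex.norm_natCast, div_mul_eq_mul_div, div_eq_inv_mul,
    ← sum_image fun g _ g' _ => mul_right_cancel]
  gcongr
  exact s.norm_sum_sub_sum_le_card_symmDiff_mul _ hu

lemma isState_iff {A : Type*} [NormedRing A] [StarRing A] [NormedAlgebra ℂ A] {φ : A → ℂ} :
    IsState φ ↔ (∀ x y, φ (x + y) = φ x + φ y) ∧ (∀ (c : ℂ) x, φ (c • x) = c * φ x) ∧
      φ 1 = 1 ∧ ∀ x, 0 ≤ φ (star x * x) := by
  simp only [IsState, Complex.nonneg_iff, eq_comm (a := (0 : ℝ))]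

namespace IsState

section NormedAlgebra

variable {A : Type*} [NormedRing A] [StarRing A] [NormedAlgebra ℂ A] {φ : A → ℂ}

def toLinearMap (hφ : IsState φ) : A →ₗ[ℂ] ℂ where
  toFun := φ
  map_add' := hφ.1
  map_smul' := hφ.2.1

lemma map_zero (hφ : IsState φ) : φ 0 = 0 := _root_.map_zero hφ.toLinearMap

lemma map_sub (hφ : IsState φ) (x y : A) : φ (x - y) = φ x - φ y :=
  _root_.map_sub hφ.toLinearMap x y

lemma map_sum (hφ : IsState φ) {ι : Type*} (s : Finset ι) (f : ι → A) :
    φ (∑ i ∈ s, f i) = ∑ i ∈ s, φ (f i) :=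
  _root_.map_sum hφ.toLinearMap f s

lemma apply_inv_card_smul_sum_of_invariant {G : Type*} (hφ : IsState φ) {Θ : G → A → A}
    (hinv : ∀ g x, φ (Θ g x) = φ x) {s : Finset G} (hs : s.Nonempty) (x : A) :
    φ ((#s : ℂ)⁻¹ • ∑ g ∈ s, Θ g x) = φ x := by
  rw [hφ.2.1, hφ.map_sum, sum_congr rfl fun g _ => hinv g x, sum_const, nsmul_eq_mul,
    inv_mul_cancel_left₀ (Nat.cast_ne_zero.2 hs.card_pos.ne')]

lemma star_mul_self_nonneg (hφ : IsState φ) (x : A) : 0 ≤ φ (star x * x) :=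
  (isState_iff.1 hφ).2.2.2 x

lemma nontrivial (hφ : IsState φ) : Nontrivial A :=
  ⟨⟨1, 0, fun h => one_ne_zero (by rw [← hφ.2.2.1, h, hφ.map_zero])⟩⟩

lemma comp {B F : Type*} [NormedRing B] [StarRing B] [NormedAlgebra ℂ B] [FunLike F B A]
    [AlgHomClass F ℂ B A] [StarHomClass F B A] (hφ : IsState φ) (Θ : F) :
    IsState fun x => φ (Θ x) := by
  refine isState_iff.2 ⟨fun x y => ?_, fun c x => ?_, ?_, fun x => ?_⟩
  · rw [map_add, hφ.1]
  · rw [map_smul, hφ.2.1]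
  · rw [map_one, hφ.2.2.1]
  · rw [map_mul, map_star]
    exact hφ.star_mul_self_nonneg _

lemma average {ι : Type*} {s : Finset ι} (hs : s.Nonempty) {φ : ι → A → ℂ}
    (hφ : ∀ i ∈ s, IsState (φ i)) : IsState fun x => (#s : ℂ)⁻¹ * ∑ i ∈ s, φ i x := by
  refine isState_iff.2 ⟨fun x y => ?_, fun c x => ?_, ?_, fun x => ?_⟩
  · rw [sum_congr rfl fun i hi => (hφ i hi).1 x y, sum_add_distrib, mul_add]
  · rw [sum_congr rfl fun i hi => (hφ i hi).2.1 c x, ← mul_sum, mul_left_comm]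
  · rw [sum_congr rfl fun i hi => (hφ i hi).2.2.1, sum_const, nsmul_one,
      inv_mul_cancel₀ (Nat.cast_ne_zero.2 hs.card_pos.ne')]
  · exact mul_nonneg (by positivity)
      (sum_nonneg fun i hi => (hφ i hi).star_mul_self_nonneg x)

lemma of_tendsto {ι : Type*} {l : Filter ι} [l.NeBot] {φ : ι → A → ℂ} (hφ : ∀ i, IsState (φ i))
    {ψ : A → ℂ} (h : ∀ x, Tendsto (fun i => φ i x) l (𝓝 (ψ x))) : IsState ψ := by
  refine isState_iff.2 ⟨fun x y => ?_, fun c x => ?_, ?_, fun x => ?_⟩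
  · exact tendsto_nhds_unique ((h (x + y)).congr fun i => (hφ i).1 x y) ((h x).add (h y))
  · exact tendsto_nhds_unique ((h (c • x)).congr fun i => (hφ i).2.1 c x) ((h x).const_mul c)
  · exact tendsto_nhds_unique ((h 1).congr fun i => (hφ i).2.2.1) tendsto_const_nhds
  · exact ge_of_tendsto' (h _) fun i => (hφ i).star_mul_self_nonneg x

-- Tychonoff: contractive functions `A → ℂ` form a compact set for pointwise convergence.
lemma exists_tendsto_of_norm_le {ι : Type*} (U : Ultrafilter ι) {φ : ι → A → ℂ}
    (hφ : ∀ i, IsState (φ i)) (hbdd : ∀ i x, ‖φ i x‖ ≤ ‖x‖) :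
    ∃ ψ, IsState ψ ∧ ∀ x, Tendsto (fun i => φ i x) U (𝓝 (ψ x)) := by
  have hK : IsCompact (Set.univ.pi fun x : A => Metric.closedBall (0 : ℂ) ‖x‖) :=
    isCompact_univ_pi fun x => isCompact_closedBall 0 ‖x‖
  obtain ⟨ψ, -, hψ⟩ := hK.ultrafilter_le_nhds (U.map φ) (by
    rw [Ultrafilter.coe_map, le_principal_iff]
    exact mem_map.2 <| univ_mem' fun i =>
      Set.mem_univ_pi.2 fun x => mem_closedBall_zero_iff.2 (hbdd i x))
  have h : ∀ x, Tendsto (fun i => φ i x) U (𝓝 (ψ x)) := tendsto_pi_nhds.1 hψ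
  exact ⟨ψ, of_tendsto hφ h, h⟩

end NormedAlgebra

section CStarAlgebra

variable {A : Type*} [CStarAlgebra A] {φ : A → ℂ}

lemma apply_algebraMap (hφ : IsState φ) (r : ℝ) : φ (algebraMap ℝ A r) = r := by
  rw [algebraMap_real_eq_smul_one, hφ.2.1, hφ.2.2.1, mul_one]

variable [PartialOrder A] [StarOrderedRing A]

lemma nonneg (hφ : IsState φ) {x : A} (hx : 0 ≤ x) : 0 ≤ φ x := by
  obtain ⟨y, rfl⟩ := CStarAlgebra.nonneg_iff_eq_star_mul_self.1 hx
  exact hφ.star_mul_self_nonneg y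

lemma mono (hφ : IsState φ) {x y : A} (h : x ≤ y) : φ x ≤ φ y := by
  simpa only [hφ.map_sub, sub_nonneg] using hφ.nonneg (sub_nonneg.2 h)

lemma re_apply_le_norm (hφ : IsState φ) {x : A} (hx : IsSelfAdjoint x) : (φ x).re ≤ ‖x‖ := by
  simpa [hφ.apply_algebraMap] using (Complex.le_def.1 (hφ.mono hx.le_algebraMap_norm_self)).1

end CStarAlgebra

end IsState

section CStarAlgebra

variable {A : Type*} [CStarAlgebra A]

lemma IsSelfAdjoint.norm_add_smul_I_sq_le {x : A} (hx : IsSelfAdjoint x) (r : ℝ) :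
    ‖x + (r * Complex.I) • (1 : A)‖ ^ 2 ≤ ‖x‖ ^ 2 + r ^ 2 := by
  set c : ℂ := r * Complex.I
  have hc : star c = -c := by simp [c]
  have hcc : ‖c * c‖ = r ^ 2 := by simp [c, sq]
  have h : star (x + c • (1 : A)) * (x + c • 1) = x * x - (c * c) • 1 := by
    rw [star_add, star_smul, star_one, hx.star_eq, hc, neg_smul, ← sub_eq_add_neg, sub_mul,
      mul_add, mul_add]
    simp only [smul_mul_assoc, mul_smul_comm, one_mul, mul_one, smul_smul]
    abel
  have h1 : ‖(1 : A)‖ ≤ 1 := by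
    rcases subsingleton_or_nontrivial A with hA | hA
    · simp [Subsingleton.elim (1 : A) 0]
    · simp
  rw [sq, ← CStarRing.norm_star_mul_self, h]
  calc ‖x * x - (c * c) • (1 : A)‖ ≤ ‖x * x‖ + ‖c * c‖ * ‖(1 : A)‖ :=
        (norm_sub_le _ _).trans_eq (by rw [norm_smul])
    _ ≤ ‖x‖ ^ 2 + r ^ 2 := by
        rw [hcc, sq ‖x‖]
        exact add_le_add (norm_mul_le x x) (mul_le_of_le_one_right (sq_nonneg r) h1)

/-- Otherwise `|f (x + i r)| ≥ |Im f x + r|` would outgrow `‖x + i r‖ ≤ √(‖x‖² + r²)`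
as `r → ±∞`. -/
lemma im_apply_eq_zero_of_norm_le_one (f : StrongDual ℂ A) (hf1 : f 1 = 1) (hf : ‖f‖ ≤ 1)
    {x : A} (hx : IsSelfAdjoint x) : (f x).im = 0 := by
  set t := (f x).im
  have key : ∀ r : ℝ, (t + r) ^ 2 ≤ ‖x‖ ^ 2 + r ^ 2 := fun r =>
    calc (t + r) ^ 2 = (f (x + (r * Complex.I) • 1)).im ^ 2 := by simp [hf1, t]
      _ ≤ ‖f (x + (r * Complex.I) • 1)‖ ^ 2 := by
          rw [← sq_abs]; gcongr; exact Complex.abs_im_le_norm _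
      _ ≤ ‖x + (r * Complex.I) • 1‖ ^ 2 := by
          gcongr; simpa using f.le_of_opNorm_le hf (x + (r * Complex.I) • 1)
      _ ≤ ‖x‖ ^ 2 + r ^ 2 := hx.norm_add_smul_I_sq_le r
  by_contra ht
  have h := key ((‖x‖ ^ 2 + 1) / (2 * t))
  have h2t : 2 * t * ((‖x‖ ^ 2 + 1) / (2 * t)) = ‖x‖ ^ 2 + 1 := by field_simp
  nlinarith [sq_nonneg t]

variable [PartialOrder A] [StarOrderedRing A]

lemma isState_of_norm_le_one (f : StrongDual ℂ A) (hf1 : f 1 = 1) (hf : ‖f‖ ≤ 1) :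
    IsState f := by
  refine isState_iff.2 ⟨map_add f, map_smul f, hf1, fun c => ?_⟩
  set y := star c * c
  have hy : 0 ≤ y := star_mul_self_nonneg c
  set z := algebraMap ℝ A ‖y‖ - y
  -- since `0 ≤ z ≤ ‖y‖`
  have hz : ‖z‖ ≤ ‖y‖ :=
    (CStarAlgebra.norm_le_iff_le_algebraMap _ (norm_nonneg y)
      (sub_nonneg.2 (IsSelfAdjoint.of_nonneg hy).le_algebraMap_norm_self)).2 (sub_le_self _ hy)
  have hfz : f z = ‖y‖ - f y := by
    rw [map_sub, algebraMap_real_eq_smul_one, map_smul, hf1, smul_eq_mul, mul_one]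
  have hre : ‖y‖ - (f y).re ≤ ‖y‖ := calc
    ‖y‖ - (f y).re = (f z).re := by simp [hfz]
    _ ≤ ‖f z‖ := Complex.re_le_norm _
    _ ≤ ‖z‖ := by simpa using f.le_of_opNorm_le hf z
    _ ≤ ‖y‖ := hz
  exact Complex.nonneg_iff.2
    ⟨by linarith, (im_apply_eq_zero_of_norm_le_one f hf1 hf (.of_nonneg hy)).symm⟩

lemma inv_card_smul_sum_nonneg {ι : Type*} (s : Finset ι) {x : ι → A} (hx : ∀ i ∈ s, 0 ≤ x i) :
    0 ≤ (#s : ℂ)⁻¹ • ∑ i ∈ s, x i :=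
  smul_nonneg (by positivity) (sum_nonneg hx)

variable [Nontrivial A]

lemma norm_add_one_of_nonneg {b : A} (hb : 0 ≤ b) : ‖b + 1‖ = ‖b‖ + 1 := by
  refine le_antisymm ((norm_add_le _ _).trans_eq (by rw [norm_one])) ?_
  have h : ‖b‖ + 1 ∈ spectrum ℝ (algebraMap ℝ A 1 + b) :=
    spectrum.add_mem_add_iff.2 (CStarAlgebra.norm_mem_spectrum_of_nonneg hb)
  rw [map_one, add_comm] at h
  simpa [abs_of_nonneg (norm_nonneg b), abs_of_nonneg (by positivity : 0 ≤ ‖b‖ + 1)]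
    using spectrum.norm_le_norm_of_mem h

/-- Hahn–Banach applied to `b + 1`, whose norm `‖b‖ + 1` forces both `f b = ‖b‖` and `f 1 = 1`. -/
lemma exists_isState_apply_eq_norm {b : A} (hb : 0 ≤ b) :
    ∃ f : StrongDual ℂ A, ‖f‖ ≤ 1 ∧ IsState f ∧ f b = ‖b‖ := by
  obtain ⟨f, hf, hfb⟩ :=
    exists_dual_vector ℂ (b + 1) (by rw [norm_add_one_of_nonneg hb]; positivity)
  rw [norm_add_one_of_nonneg hb, map_add] at hfb
  push_cast at hfb
  have hle : ∀ x, ‖f x‖ ≤ ‖x‖ := fun x => by simpa using f.le_of_opNorm_le hf.le x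
  have hb' : f b = ‖b‖ := Complex.eq_of_norm_le_of_add_eq (hle b) ((hle 1).trans_eq norm_one) hfb
  have h1 : f 1 = 1 := add_left_cancel (hb' ▸ hfb)
  exact ⟨f, hf.le, isState_of_norm_le_one f h1 hf.le, hb'⟩

end CStarAlgebra

section Foelner

variable {G A F : Type*} [Group G] [DecidableEq G] [CStarAlgebra A] [PartialOrder A]
  [StarOrderedRing A] [Nontrivial A] [FunLike F A A] [AlgHomClass F ℂ A A] [StarHomClass F A A]

theorem exists_invariant_state_tendsto_norm_average {s : ℕ → Finset G}
    (hne : ∀ k, (s k).Nonempty)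
    (hFolner : ∀ g : G,
      Tendsto (fun k => (#(symmDiff (s k) ((s k).image (· * g))) : ℝ) / #(s k)) atTop (𝓝 0))
    (Θ : G → F) (hΘ : ∀ g h x, Θ (g * h) x = Θ g (Θ h x)) {a : A} (ha : 0 ≤ a)
    (U : Ultrafilter ℕ) (hU : (U : Filter ℕ) ≤ atTop) :
    ∃ ψ : A → ℂ, IsState ψ ∧ (∀ g x, ψ (Θ g x) = ψ x) ∧
      Tendsto (fun k => ‖(#(s k) : ℂ)⁻¹ • ∑ g ∈ s k, Θ g a‖) U (𝓝 (ψ a).re) := by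
  choose φ hφ1 hφ hφa using fun k => exists_isState_apply_eq_norm
    (inv_card_smul_sum_nonneg (s k) fun g _ => map_nonneg (Θ g) ha)
  have hφle : ∀ k g x, ‖φ k (Θ g x)‖ ≤ ‖x‖ := fun k g x =>
    ((φ k).le_of_opNorm_le (hφ1 k) _).trans
      (by simpa using NonUnitalStarAlgHom.norm_apply_le (Θ g) x)
  obtain ⟨ψ, hψ, hlim⟩ := IsState.exists_tendsto_of_norm_le U
    (φ := fun k x => (#(s k) : ℂ)⁻¹ * ∑ g ∈ s k, φ k (Θ g x))
    (fun k => IsState.average (hne k) fun g _ => (hφ k).comp (Θ g))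
    (fun k x => norm_inv_card_mul_sum_le (hne k) fun g _ => hφle k g x)
  refine ⟨ψ, hψ, fun h x => ?_, ?_⟩
  · have hsmall : Tendsto (fun k => (#(s k) : ℂ)⁻¹ * ∑ g ∈ s k, φ k (Θ g (Θ h x)) -
        (#(s k) : ℂ)⁻¹ * ∑ g ∈ s k, φ k (Θ g x)) atTop (𝓝 0) := by
      refine squeeze_zero_norm (fun k => ?_)
        (by simpa only [zero_mul] using (hFolner h).mul_const ‖x‖)
      simpa only [hΘ] using norm_inv_card_mul_sum_mul_right_sub_le (s k) (fun g => hφle k g x) h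
    exact sub_eq_zero.1 (tendsto_nhds_unique ((hlim _).sub (hlim x)) (hsmall.mono_left hU))
  · have hval : ∀ k, (#(s k) : ℂ)⁻¹ * ∑ g ∈ s k, φ k (Θ g a) =
        ‖(#(s k) : ℂ)⁻¹ • ∑ g ∈ s k, Θ g a‖ := fun k => by
      rw [← hφa k, map_smul, map_sum, smul_eq_mul]
    simpa only [hval, Function.comp_def, Complex.ofReal_re] using
      (Complex.continuous_re.tendsto _).comp (hlim a)

end Foelner

theorem norm_average_tendsto_ergodic_max_general
    {G : Type*} [Group G] [DecidableEq G] {A : Type*}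
    [NormedRing A] [StarRing A] [CStarRing A] [NormedAlgebra ℂ A] [StarModule ℂ A]
    [CompleteSpace A]
    (F : ℕ → Finset G) (hne : ∀ k, (F k).Nonempty)
    (hFolner : ∀ g : G,
      Tendsto (fun k => ((symmDiff (F k) ((F k).image (· * g))).card : ℝ) / (F k).card)
        atTop (nhds 0))
    (Θ : G → A ≃⋆ₐ[ℂ] A) (hΘ : ∀ g h : G, ∀ x : A, Θ (g * h) x = Θ g (Θ h x))
    (hstate : ∃ ψ : A → ℂ, IsState ψ ∧ ∀ (g : G) (x : A), ψ (Θ g x) = ψ x)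
    (a : A) (ha : ∃ b : A, a = star b * b) :
    Tendsto (fun k => ‖((F k).card : ℂ)⁻¹ • ∑ g ∈ F k, Θ g a‖) atTop
      (nhds (sSup {x : ℝ | ∃ ψ : A → ℂ, IsState ψ ∧
        (∀ (g : G) (y : A), ψ (Θ g y) = ψ y) ∧ (ψ a).re = x})) := by
  let : CStarAlgebra A := {}
  let : PartialOrder A := CStarAlgebra.spectralOrder A
  let : StarOrderedRing A := CStarAlgebra.spectralOrderedRing A
  obtain ⟨ψ₀, hψ₀, -⟩ := hstate
  have := hψ₀.nontrivial
  replace ha : 0 ≤ a := CStarAlgebra.nonneg_iff_eq_star_mul_self.2 ha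
  set S := {x : ℝ | ∃ ψ : A → ℂ, IsState ψ ∧
    (∀ (g : G) (y : A), ψ (Θ g y) = ψ y) ∧ (ψ a).re = x}
  have hS_bdd : BddAbove S :=
    ⟨‖a‖, by rintro _ ⟨ψ, hψ, -, rfl⟩; exact hψ.re_apply_le_norm (.of_nonneg ha)⟩
  have hS_le : ∀ k, sSup S ≤ ‖((F k).card : ℂ)⁻¹ • ∑ g ∈ F k, Θ g a‖ := fun k => by
    refine Real.sSup_le ?_ (norm_nonneg _)
    rintro _ ⟨ψ, hψ, hinv, rfl⟩
    rw [← hψ.apply_inv_card_smul_sum_of_invariant hinv (hne k) a]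
    exact hψ.re_apply_le_norm
      (.of_nonneg (inv_card_smul_sum_nonneg _ fun g _ => map_nonneg _ ha))
  refine (tendsto_iff_ultrafilter _ _ _).2 fun U hU => ?_
  obtain ⟨ψ, hψ, hinv, hlim⟩ :=
    exists_invariant_state_tendsto_norm_average hne hFolner Θ hΘ ha U hU
  have hψa : (ψ a).re = sSup S :=
    le_antisymm (le_csSup hS_bdd ⟨ψ, hψ, hinv, rfl⟩) (ge_of_tendsto' hlim hS_le)
  rwa [← hψa]

/-- Main theorem, faithful case: for an action of an amenable group (with right
Følner sequence `F_k`) on a unital C*-algebra admitting an invariant state, the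
norms of the Følner averages of a positive element `a` converge to the ergodic
maximum `m(a) = sup { ψ(a) : ψ an invariant state }`. -/
theorem norm_average_tendsto_ergodic_max
    {G : Type*} [Group G] [DecidableEq G] [Countable G] {A : Type*}
    [NormedRing A] [StarRing A] [CStarRing A] [NormedAlgebra ℂ A] [StarModule ℂ A]
    [CompleteSpace A]
    (F : ℕ → Finset G) (hne : ∀ k, (F k).Nonempty)
    (hFolner : ∀ g : G,
      Tendsto (fun k => ((symmDiff (F k) ((F k).image (· * g))).card : ℝ) / (F k).card)
        atTop (nhds 0))
    (Θ : G → A ≃⋆ₐ[ℂ] A) (hΘ : ∀ g h : G, ∀ x : A, Θ (g * h) x = Θ g (Θ h x))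
    (hstate : ∃ ψ : A → ℂ, IsState ψ ∧ ∀ (g : G) (x : A), ψ (Θ g x) = ψ x)
    (a : A) (ha : ∃ b : A, a = star b * b) :
    Tendsto (fun k => ‖((F k).card : ℂ)⁻¹ • ∑ g ∈ F k, Θ g a‖) atTop
      (nhds (sSup {x : ℝ | ∃ ψ : A → ℂ, IsState ψ ∧
        (∀ (g : G) (y : A), ψ (Θ g y) = ψ y) ∧ (ψ a).re = x})) :=
  norm_average_tendsto_ergodic_max_general F hne hFolner Θ hΘ hstate a ha
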